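/- Let H₀ and H₁ be complex Hilbert spaces, T₀ ∈ B(H₀), T₁ ∈ B(H₁), A ∈ B(H₁, H₀), and let R be the block operator on H₀ ⊕₂ H₁ defined by R(x, h) = (T₀x + Ah, T₁h). Let μ, ν ∈ ℂ, let k ∈ H₁ satisfy T₁ k = μ k, and let e ∈ H₀ satisfy T₀* e = conj(ν)·e, where T₀* is the Hilbert-space adjoint. Denote by P₀ : H₀ ⊕₂ H₁ → H₀ the projection onto the first coordinate, and by ⟨e, u⟩ the inner product, linear in u. Then for every polynomial p with complex coefficients: if μ ≠ ν, then ⟨e, P₀(p(R)(0, k))⟩ = ((p(μ) − p(ν))/(μ − ν))·⟨e, A k⟩, and if μ = ν, then ⟨e, P₀(p(R)(0, k))⟩ = p′(μ)·⟨e, A k⟩, where p′ is the derivative of p. -/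

import Mathlib

/-!
Divide by `X - ν`: `p = (X - ν) q + p(ν)`. The second coordinate of `q(R)(0, k)` is
`q(T₁) k = q(μ) k` because `R` is upper triangular, and `⟨e, P₀ (R - ν) (x, h)⟩ = ⟨e, A h⟩`
because `e` is an eigenvector of `T₀*`. Hence `⟨e, P₀ p(R)(0, k)⟩ = q(μ) ⟨e, A k⟩`, and `q(μ)` is the
divided difference `(p(μ) - p(ν)) / (μ - ν)`, or `p′(ν)` when `μ = ν`.
-/
open Polynomial

namespace Polynomial

variable {K : Type*}

theorem eval_divByMonic_X_sub_C_self [CommRing K] (p : K[X]) (a : K) :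
    (p /ₘ (X - C a)).eval a = p.derivative.eval a := by
  simpa using
    congr_arg (eval a) (divByMonic_add_X_sub_C_mul_derivative_divByMonic_eq_derivative p a)

theorem eval_divByMonic_X_sub_C_of_ne [Field K] (p : K[X]) {a b : K} (h : b ≠ a) :
    (p /ₘ (X - C a)).eval b = (p.eval b - p.eval a) / (b - a) := by
  have := congr_arg (eval b) (X_sub_C_mul_divByMonic_eq_sub_modByMonic p a)
  rw [modByMonic_X_sub_C_eq_C_eval] at this
  simp only [eval_mul, eval_sub, eval_X, eval_C] at this
  rw [← this, mul_div_cancel_left₀ _ (sub_ne_zero.mpr h)]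

end Polynomial

theorem LinearMap.apply_aeval_of_comp_eq_comp {R M N : Type*} [CommSemiring R]
    [AddCommMonoid M] [Module R M] [AddCommMonoid N] [Module R N]
    {f : M →ₗ[R] N} {S : Module.End R M} {T : Module.End R N} (h : T ∘ₗ f = f ∘ₗ S)
    (p : R[X]) (m : M) : f (aeval S p m) = aeval T p (f m) := by
  induction p using Polynomial.induction_on' with
  | add p q hp hq => simp [hp, hq]
  | monomial n a =>
    simpa [aeval_monomial, Module.algebraMap_end_apply] using
      congr_arg (a • ·) (LinearMap.congr_fun (Module.End.commute_pow_left_of_commute h n) m).symm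

namespace ContinuousLinearMap

section Aeval

variable {R M : Type*} [CommRing R] [TopologicalSpace M] [AddCommGroup M] [Module R M]
  [IsTopologicalAddGroup M] [ContinuousConstSMul R M]

theorem coe_aeval (S : M →L[R] M) (p : R[X]) :
    ((aeval S p : M →L[R] M) : M →ₗ[R] M) = aeval (S : M →ₗ[R] M) p :=
  let toLinearMapAlgHom : (M →L[R] M) →ₐ[R] Module.End R M :=
    { toLinearMapRingHom with commutes' := fun _ => rfl }
  (aeval_algHom_apply toLinearMapAlgHom S p).symm

theorem aeval_apply_of_apply_eq_smul {T : M →L[R] M} {μ : R} {k : M} (hk : T k = μ • k)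
    (p : R[X]) : aeval T p k = p.eval μ • k := by
  rw [← coe_coe, coe_aeval]
  exact Module.End.aeval_apply_of_mem_apply_eq_smul hk

end Aeval

theorem inner_apply_eq_mul_of_adjoint_apply_eq_smul {𝕜 E : Type*} [RCLike 𝕜]
    [NormedAddCommGroup E] [InnerProductSpace 𝕜 E] [CompleteSpace E]
    {T : E →L[𝕜] E} {ν : 𝕜} {e : E} (he : adjoint T e = starRingEnd 𝕜 ν • e) (x : E) :
    inner 𝕜 e (T x) = ν * inner 𝕜 e x := by
  rw [← adjoint_inner_left, he, inner_smul_left, RCLike.conj_conj]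

end ContinuousLinearMap

section BlockOperator

variable {𝕜 H₀ H₁ : Type*} [RCLike 𝕜]

theorem WithLp.snd_aeval_apply_of_snd_apply [NormedAddCommGroup H₀] [NormedSpace 𝕜 H₀]
    [NormedAddCommGroup H₁] [NormedSpace 𝕜 H₁]
    {T₁ : H₁ →L[𝕜] H₁} {R : WithLp 2 (H₀ × H₁) →L[𝕜] WithLp 2 (H₀ × H₁)}
    (hR : ∀ w, (R w).snd = T₁ w.snd) (p : 𝕜[X]) (w : WithLp 2 (H₀ × H₁)) :
    (aeval R p w).snd = aeval T₁ p w.snd := by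
  have hsnd : (T₁ : Module.End 𝕜 H₁) ∘ₗ sndₗ 2 𝕜 H₀ H₁ = sndₗ 2 𝕜 H₀ H₁ ∘ₗ (R : Module.End 𝕜 _) :=
    LinearMap.ext fun w => (hR w).symm
  have := LinearMap.apply_aeval_of_comp_eq_comp hsnd p w
  rwa [← ContinuousLinearMap.coe_aeval, ← ContinuousLinearMap.coe_aeval] at this

section InnerProductSpace

variable [NormedAddCommGroup H₀] [InnerProductSpace 𝕜 H₀] [NormedAddCommGroup H₁]
  [InnerProductSpace 𝕜 H₁] {T₀ : H₀ →L[𝕜] H₀} {T₁ : H₁ →L[𝕜] H₁} {A : H₁ →L[𝕜] H₀}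
  {R : WithLp 2 (H₀ × H₁) →L[𝕜] WithLp 2 (H₀ × H₁)} {ν : 𝕜} {e : H₀}

theorem WithLp.inner_fst_sub_smul_apply_of_fst_apply (hR : ∀ w, (R w).fst = T₀ w.fst + A w.snd)
    (he : ∀ x, inner 𝕜 e (T₀ x) = ν * inner 𝕜 e x) (w : WithLp 2 (H₀ × H₁)) :
    inner 𝕜 e ((R - ν • 1) w).fst = inner 𝕜 e (A w.snd) := by
  rw [_root_.sub_apply, sub_fst, inner_sub_right, hR, inner_add_right, he, _root_.smul_apply,
    one_apply_eq_self, smul_fst, inner_smul_right, add_sub_cancel_left]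

theorem WithLp.inner_fst_aeval_toLp_zero_of_block (hfst : ∀ w, (R w).fst = T₀ w.fst + A w.snd)
    (hsnd : ∀ w, (R w).snd = T₁ w.snd) (he : ∀ x, inner 𝕜 e (T₀ x) = ν * inner 𝕜 e x)
    {μ : 𝕜} {k : H₁} (hk : T₁ k = μ • k) (p : 𝕜[X]) :
    inner 𝕜 e (aeval R p (toLp 2 (0, k))).fst = (p /ₘ (X - C ν)).eval μ * inner 𝕜 e (A k) := by
  set v := toLp 2 ((0 : H₀), k)
  set q := p /ₘ (X - C ν)
  have hp : p = (X - C ν) * q + C (p.eval ν) := by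
    rw [← modByMonic_X_sub_C_eq_C_eval, add_comm, modByMonic_add_div]
  have hpR : aeval R p v = (R - ν • 1) (aeval R q v) + p.eval ν • v := by
    conv_lhs => rw [hp]
    rw [map_add, map_mul, map_sub, aeval_X, aeval_C, aeval_C, Algebra.algebraMap_eq_smul_one,
      Algebra.algebraMap_eq_smul_one]
    rfl
  have hq : (aeval R q v).snd = q.eval μ • k := by
    rw [snd_aeval_apply_of_snd_apply hsnd, toLp_snd,
      ContinuousLinearMap.aeval_apply_of_apply_eq_smul hk]
  have hv : v.fst = 0 := rfl
  rw [hpR, add_fst, smul_fst, hv, smul_zero, add_zero,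
    inner_fst_sub_smul_apply_of_fst_apply hfst he, hq, map_smul, inner_smul_right]

end InnerProductSpace

end BlockOperator

theorem inner_aeval_block_eigenvector
    {H₀ H₁ : Type}
    [NormedAddCommGroup H₀] [InnerProductSpace ℂ H₀] [CompleteSpace H₀]
    [NormedAddCommGroup H₁] [InnerProductSpace ℂ H₁]
    (T₀ : H₀ →L[ℂ] H₀) (T₁ : H₁ →L[ℂ] H₁) (A : H₁ →L[ℂ] H₀)
    (R : WithLp 2 (H₀ × H₁) →L[ℂ] WithLp 2 (H₀ × H₁))
    (hR : ∀ (x : H₀) (h : H₁),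
      R ((WithLp.equiv 2 (H₀ × H₁)).symm (x, h))
        = (WithLp.equiv 2 (H₀ × H₁)).symm (T₀ x + A h, T₁ h))
    (μ ν : ℂ) (k : H₁) (hk : T₁ k = μ • k)
    (e : H₀) (he : ContinuousLinearMap.adjoint T₀ e = (starRingEnd ℂ) ν • e) :
    ∀ p : Polynomial ℂ,
      (μ ≠ ν →
        (inner ℂ e
          (WithLp.equiv 2 (H₀ × H₁)
            (Polynomial.aeval R p ((WithLp.equiv 2 (H₀ × H₁)).symm (0, k)))).1 : ℂ)
          = ((p.eval μ - p.eval ν) / (μ - ν)) * (inner ℂ e (A k) : ℂ)) ∧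
      (μ = ν →
        (inner ℂ e
          (WithLp.equiv 2 (H₀ × H₁)
            (Polynomial.aeval R p ((WithLp.equiv 2 (H₀ × H₁)).symm (0, k)))).1 : ℂ)
          = (Polynomial.derivative p).eval μ * (inner ℂ e (A k) : ℂ)) := by
  simp only [WithLp.equiv_apply, WithLp.equiv_symm_apply, WithLp.ofLp_fst] at hR ⊢
  intro p
  have key := WithLp.inner_fst_aeval_toLp_zero_of_block
    (fun w => congr_arg WithLp.fst (hR w.fst w.snd))
    (fun w => congr_arg WithLp.snd (hR w.fst w.snd))
    (ContinuousLinearMap.inner_apply_eq_mul_of_adjoint_apply_eq_smul he) hk p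
  refine ⟨fun hne => ?_, fun heq => ?_⟩
  · rw [key, eval_divByMonic_X_sub_C_of_ne p hne]
  · rw [key, heq, eval_divByMonic_X_sub_C_self]
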